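/- Let A be a compact metric space and μ a Borel probability measure on [0,T] × A whose marginal on [0,T] is Lebesgue measure (a relaxed control). Then there exists a sequence of measurable functions u_n : [0,T] → A such that the measures δ_{u_n(t)}(da) dt converge to μ in the weak-* (stable) topology: for every continuous f : [0,T] × A → ℝ, ∫_0^T f(t, u_n(t)) dt → ∫_{[0,T]×A} f dμ. -/

import Mathlib

/-!
Cut `(0, T]` into intervals `I j` of length `L < δ` and `A` into measurable pieces `S i` lying in
balls `ball (a i) δ`. Inside `I j` the strict control takes the value `a i` on consecutive
subintervals `E (j, i)` of length `μ (I j ×ˢ S i)`. Thus Lebesgue measure on the cells `E (j, i)`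
and `μ` on the cells `I j ×ˢ S i` carry the same masses, and on matched cells the integrands
`f (t, u t)` and `f` stay within the oscillation `ε` of `f` at scale `δ` from the common value
`f (b j + L, a i)`. Both integrals are therefore within `ε T` of the same Riemann sum, and uniform
continuity of `f` on `[0, T] × A` makes `ε` small as `δ → 0`.
-/

open MeasureTheory Filter Set Metric
open scoped Function

theorem exists_pairwise_disjoint_Ioc_iUnion_eq {α : Type*} [AddCommGroup α] [LinearOrder α]
    [IsOrderedAddMonoid α] (a : α) {K : ℕ} {w : Fin K → α} (hw : ∀ i, 0 ≤ w i) :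
    ∃ b : Fin K → α, Pairwise (Disjoint on fun i => Ioc (b i) (b i + w i)) ∧
      ⋃ i, Ioc (b i) (b i + w i) = Ioc a (a + ∑ i, w i) := by
  set w' : ℕ → α := fun n => if h : n < K then w ⟨n, h⟩ else 0
  set F : ℕ → α := fun n => a + ∑ k ∈ Finset.range n, w' k
  have hF : Monotone F := monotone_nat_of_le_succ fun n => by
    simp only [F, w', Finset.sum_range_succ, ← add_assoc]
    split_ifs <;> simp [hw]
  have hFw : ∀ i : Fin K, F i + w i = F (i + 1) := fun i => by
    simp [F, w', Finset.sum_range_succ, add_assoc]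
  have hFK : a + ∑ i, w i = F K := by
    simp [F, ← Fin.sum_univ_eq_sum_range w' K, w']
  refine ⟨fun i => F i, ?_, ?_⟩
  · simp only [hFw]
    simpa [Order.succ_eq_add_one] using
      hF.pairwise_disjoint_on_Ioc_succ.comp_of_injective Fin.val_injective
  · have hF0 : a = F 0 := by simp [F]
    simp only [hFw, hFK]
    rw [hF0]
    refine (iUnion_subset fun i : Fin K => Ioc_subset_Ioc (hF (Nat.zero_le _)) (hF i.isLt)).antisymm
      ?_
    refine (Ioc_subset_biUnion_Ioc K F).trans ?_
    simp only [Finset.mem_range, iUnion_subset_iff]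
    exact fun n hn => subset_iUnion (fun i : Fin K => Ioc (F i) (F (i + 1))) ⟨n, hn⟩

theorem exists_Ioc_grid {T δ : ℝ} (hT : 0 < T) (hδ : 0 < δ) :
    ∃ (N : ℕ) (L : ℝ) (b : Fin N → ℝ), 0 < L ∧ L < δ ∧
      Pairwise (Disjoint on fun j => Ioc (b j) (b j + L)) ∧ ⋃ j, Ioc (b j) (b j + L) = Ioc 0 T := by
  obtain ⟨N, hN⟩ := exists_nat_gt (T / δ)
  have hN0 : (0 : ℝ) < N := (div_pos hT hδ).trans hN
  obtain ⟨b, hbd, hbU⟩ :=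
    exists_pairwise_disjoint_Ioc_iUnion_eq 0 (w := fun _ : Fin N => T / N) fun _ => by positivity
  refine ⟨N, T / N, b, by positivity, (div_lt_iff₀ hN0).2 ?_, hbd, ?_⟩
  · rwa [div_lt_iff₀ hδ, mul_comm] at hN
  · simpa [mul_div_cancel₀ _ hN0.ne'] using hbU

theorem exists_measurable_partition_subset_ball (A : Type*) [PseudoMetricSpace A] [CompactSpace A]
    [MeasurableSpace A] [OpensMeasurableSpace A] {r : ℝ} (hr : 0 < r) :
    ∃ (K : ℕ) (a : Fin K → A) (S : Fin K → Set A), (∀ i, MeasurableSet (S i)) ∧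
      Pairwise (Disjoint on S) ∧ ⋃ i, S i = univ ∧ ∀ i, S i ⊆ ball (a i) r := by
  obtain ⟨t, -, ht, hcov⟩ := finite_cover_balls_of_compact (isCompact_univ (X := A)) hr
  obtain ⟨K, a, -, rfl⟩ := ht.fin_param
  refine ⟨K, a, disjointed fun i => ball (a i) r, fun i => ?_, disjoint_disjointed _, ?_,
    disjointed_subset _⟩
  · rw [disjointed_eq_inter_compl]
    exact measurableSet_ball.inter (.iInter fun j => .iInter fun _ => measurableSet_ball.compl)
  · rw [iUnion_disjointed]
    simpa [biUnion_range, univ_subset_iff] using hcov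

structure IsAEPartition {X ι : Type*} [MeasurableSpace X] (μ : Measure X) (P : ι → Set X) :
    Prop where
  measurableSet : ∀ q, MeasurableSet (P q)
  pairwise_disjoint : Pairwise (Disjoint on P)
  ae_mem_iUnion : ∀ᵐ x ∂μ, x ∈ ⋃ q, P q

namespace IsAEPartition

variable {X Y ι κ : Type*} [MeasurableSpace X] [MeasurableSpace Y]

theorem prod {μ : Measure (X × Y)} {I : ι → Set X} {S : κ → Set Y}
    (hI : IsAEPartition (μ.map Prod.fst) I) (hS : IsAEPartition (μ.map Prod.snd) S) :
    IsAEPartition μ fun q : ι × κ => I q.1 ×ˢ S q.2 where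
  measurableSet q := (hI.measurableSet q.1).prod (hS.measurableSet q.2)
  pairwise_disjoint := by
    rintro ⟨j, i⟩ ⟨j', i'⟩ hne
    refine disjoint_prod.2 ?_
    by_cases hj : j = j'
    · exact Or.inr (hS.pairwise_disjoint fun hi => hne (Prod.ext hj hi))
    · exact Or.inl (hI.pairwise_disjoint hj)
  ae_mem_iUnion := by
    filter_upwards [ae_of_ae_map measurable_fst.aemeasurable hI.ae_mem_iUnion,
      ae_of_ae_map measurable_snd.aemeasurable hS.ae_mem_iUnion] with p hp₁ hp₂
    obtain ⟨j, hj⟩ := mem_iUnion.1 hp₁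
    obtain ⟨i, hi⟩ := mem_iUnion.1 hp₂
    exact mem_iUnion.2 ⟨(j, i), hj, hi⟩

theorem uncurry {μ : Measure X} {I : ι → Set X} (hI : IsAEPartition μ I) {E : ι → κ → Set X}
    (hEm : ∀ j i, MeasurableSet (E j i)) (hEd : ∀ j, Pairwise (Disjoint on E j))
    (hEU : ∀ j, ⋃ i, E j i = I j) : IsAEPartition μ (Function.uncurry E) where
  measurableSet q := hEm q.1 q.2
  pairwise_disjoint := by
    rintro ⟨j, i⟩ ⟨j', i'⟩ hne
    by_cases hj : j = j'
    · subst hj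
      exact hEd j fun hi => hne (Prod.ext rfl hi)
    · exact (hI.pairwise_disjoint hj).mono ((subset_iUnion _ i).trans (hEU j).subset)
        ((subset_iUnion _ i').trans (hEU j').subset)
  ae_mem_iUnion := by simpa only [iUnion_prod', Function.uncurry_apply_pair, hEU] using
    hI.ae_mem_iUnion

variable [Fintype ι] {μ : Measure X} {P : ι → Set X}

theorem sum_measureReal [IsFiniteMeasure μ] (hP : IsAEPartition μ P) :
    ∑ q, μ.real (P q) = μ.real univ := by
  rw [← measureReal_iUnion_fintype hP.pairwise_disjoint hP.measurableSet]
  exact measureReal_congr (ae_eq_univ.2 hP.ae_mem_iUnion)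

theorem abs_integral_sub_sum_le [IsFiniteMeasure μ] (hP : IsAEPartition μ P) {f : X → ℝ}
    (hf : AEStronglyMeasurable f μ) {c : ι → ℝ} {ε : ℝ} (hfc : ∀ q, ∀ x ∈ P q, |f x - c q| ≤ ε) :
    |∫ x, f x ∂μ - ∑ q, μ.real (P q) * c q| ≤ ε * μ.real univ := by
  have hint : ∀ q, IntegrableOn f (P q) μ := fun q =>
    Measure.integrableOn_of_bounded (M := |c q| + ε) (measure_ne_top μ _) hf <|
      (ae_restrict_iff' (hP.measurableSet q)).2 <| ae_of_all _ fun x hx => by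
        have := hfc q x hx
        rw [Real.norm_eq_abs]
        linarith [abs_sub_abs_le_abs_sub (f x) (c q)]
  have hdev : ∀ q, |∫ x in P q, f x ∂μ - μ.real (P q) * c q| ≤ ε * μ.real (P q) := fun q => by
    rw [← smul_eq_mul, ← setIntegral_const, ← integral_sub (hint q) (integrableOn_const),
      ← Real.norm_eq_abs]
    exact norm_setIntegral_le_of_norm_le_const (measure_lt_top μ _) fun x hx =>
      (Real.norm_eq_abs _).trans_le (hfc q x hx)
  calc |∫ x, f x ∂μ - ∑ q, μ.real (P q) * c q|
      = |∑ q, (∫ x in P q, f x ∂μ - μ.real (P q) * c q)| := by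
        rw [Finset.sum_sub_distrib, ← integral_iUnion_fintype hP.measurableSet
          hP.pairwise_disjoint hint, Measure.restrict_eq_self_of_ae_mem hP.ae_mem_iUnion]
    _ ≤ ∑ q, ε * μ.real (P q) :=
        (Finset.abs_sum_le_sum_abs _ _).trans (Finset.sum_le_sum fun q _ => hdev q)
    _ = ε * μ.real univ := by rw [← Finset.mul_sum, hP.sum_measureReal]

theorem abs_integral_sub_integral_le [IsFiniteMeasure μ] {ν : Measure Y} [IsFiniteMeasure ν]
    {Q : ι → Set Y} (hP : IsAEPartition μ P) (hQ : IsAEPartition ν Q)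
    (hPQ : ∀ q, μ (P q) = ν (Q q)) {f : X → ℝ} {g : Y → ℝ} (hf : AEStronglyMeasurable f μ)
    (hg : AEStronglyMeasurable g ν) {c : ι → ℝ} {ε : ℝ}
    (hfc : ∀ q, ∀ x ∈ P q, |f x - c q| ≤ ε) (hgc : ∀ q, ∀ y ∈ Q q, |g y - c q| ≤ ε) :
    |∫ y, g y ∂ν - ∫ x, f x ∂μ| ≤ 2 * ε * μ.real univ := by
  have hreal : ∀ q, ν.real (Q q) = μ.real (P q) := fun q => by simp only [measureReal_def, hPQ]
  have hν : ν.real univ = μ.real univ := by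
    rw [← hP.sum_measureReal, ← hQ.sum_measureReal]
    simp only [hreal]
  have hQc := hQ.abs_integral_sub_sum_le hg hgc
  simp only [hreal, hν] at hQc
  set s := ∑ q, μ.real (P q) * c q
  linarith [hP.abs_integral_sub_sum_le hf hfc, abs_sub_le (∫ y, g y ∂ν) s (∫ x, f x ∂μ),
    abs_sub_comm s (∫ x, f x ∂μ)]

end IsAEPartition

theorem exists_chattering_control {A : Type*} [MeasurableSpace A] [Nonempty A] {N K : ℕ}
    {ν : Measure ℝ} {b : Fin N → ℝ} {L : ℝ} (hI : IsAEPartition ν fun j => Ioc (b j) (b j + L))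
    {m : Fin N → Fin K → ℝ} (hm0 : ∀ j i, 0 ≤ m j i) (hm : ∀ j, ∑ i, m j i = L) (a : Fin K → A) :
    ∃ (u : ℝ → A) (E : Fin N × Fin K → Set ℝ), Measurable u ∧ IsAEPartition ν E ∧
      (∀ q, volume (E q) = ENNReal.ofReal (m q.1 q.2)) ∧ (∀ q, E q ⊆ Ioc (b q.1) (b q.1 + L)) ∧
        ∀ q, ∀ t ∈ E q, u t = a q.2 := by
  choose c hcd hcU using fun j => exists_pairwise_disjoint_Ioc_iUnion_eq (b j) (hm0 j)
  set E : Fin N → Fin K → Set ℝ := fun j i => Ioc (c j i) (c j i + m j i)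
  have hEU : ∀ j, ⋃ i, E j i = Ioc (b j) (b j + L) := fun j => by rw [hcU j, hm j]
  have hE := hI.uncurry (fun _ _ => measurableSet_Ioc) hcd hEU
  obtain ⟨u, hu, hua⟩ : ∃ u : ℝ → A, Measurable u ∧
      ∀ q, EqOn u (fun _ => a q.2) (Function.uncurry E q) := by
    rcases isEmpty_or_nonempty (Fin N × Fin K) with hι | hι
    · exact ⟨fun _ => Classical.arbitrary A, measurable_const, isEmptyElim⟩
    · exact exists_measurable_piecewise _ hE.measurableSet _ (fun _ => measurable_const)
        fun q q' hqq' => by simp [(hE.pairwise_disjoint hqq').inter_eq]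
  refine ⟨u, Function.uncurry E, hu, hE, fun q => ?_, fun q => ?_, hua⟩
  · exact Real.volume_Ioc.trans (by rw [add_sub_cancel_left])
  · exact (subset_iUnion (E q.1) q.2).trans (hEU q.1).subset

theorem exists_strict_control_approx {A : Type*} [PseudoMetricSpace A] [CompactSpace A]
    [Nonempty A] [MeasurableSpace A] [OpensMeasurableSpace A] {T : ℝ} {μ : Measure (ℝ × A)}
    (hT : 0 < T) (hmarg : μ.map Prod.fst = volume.restrict (Ioc 0 T)) {δ : ℝ} (hδ : 0 < δ) :
    ∃ u : ℝ → A, Measurable u ∧ ∀ f : ℝ × A → ℝ, Continuous f → ∀ ε : ℝ,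
      (∀ p ∈ Icc 0 T ×ˢ univ, ∀ q ∈ Icc 0 T ×ˢ univ, dist p q < δ → dist (f p) (f q) < ε) →
      |(∫ t in Ioc 0 T, f (t, u t)) - ∫ p, f p ∂μ| ≤ 2 * ε * T := by
  have hprod : ∀ s, MeasurableSet s → μ (s ×ˢ univ) = volume (s ∩ Ioc 0 T) := fun s hs => by
    rw [prod_univ, ← Measure.map_apply measurable_fst hs, hmarg, Measure.restrict_apply hs]
  have : IsFiniteMeasure μ :=
    ⟨by rw [← univ_prod_univ, hprod _ .univ, univ_inter]; exact measure_Ioc_lt_top⟩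
  have hμT : μ.real univ = T := by simp [measureReal_def, ← univ_prod_univ, hprod, hT.le]
  obtain ⟨K, a, S, hSm, hSd, hSU, hSa⟩ := exists_measurable_partition_subset_ball A hδ
  obtain ⟨N, L, b, hL, hLδ, hbd, hbU⟩ := exists_Ioc_grid hT hδ
  set I : Fin N → Set ℝ := fun j => Ioc (b j) (b j + L)
  have hIT : ∀ j, I j ⊆ Ioc 0 T := fun j => hbU ▸ subset_iUnion I j
  have hI : IsAEPartition (volume.restrict (Ioc 0 T)) I :=
    ⟨fun _ => measurableSet_Ioc, hbd, by rw [hbU]; exact ae_restrict_mem measurableSet_Ioc⟩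
  have hP : IsAEPartition μ fun q : Fin N × Fin K => I q.1 ×ˢ S q.2 :=
    (hmarg ▸ hI).prod ⟨hSm, hSd, by simp [hSU]⟩
  have hm : ∀ j, ∑ i, μ.real (I j ×ˢ S i) = L := fun j => by
    rw [← measureReal_iUnion_fintype (fun i i' h => disjoint_prod.2 (Or.inr (hSd h)))
      fun i => measurableSet_Ioc.prod (hSm i), ← prod_iUnion, hSU, measureReal_def,
      hprod _ measurableSet_Ioc, inter_eq_left.2 (hIT j)]
    simp [I, hL.le]
  obtain ⟨u, E, hu, hE, hEm, hEI, hua⟩ :=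
    exists_chattering_control hI (fun _ _ => measureReal_nonneg) hm a
  refine ⟨u, hu, fun f hf ε hfε => ?_⟩
  have hosc : ∀ j i, ∀ t ∈ I j, ∀ x, dist x (a i) < δ → |f (t, x) - f (b j + L, a i)| ≤ ε := by
    intro j i t ht x hx
    have hbj : b j + L ∈ I j := right_mem_Ioc.2 (by linarith)
    refine (hfε (t, x) ⟨Ioc_subset_Icc_self (hIT j ht), trivial⟩ (b j + L, a i)
      ⟨Ioc_subset_Icc_self (hIT j hbj), trivial⟩ ?_).le
    rw [Prod.dist_eq, Real.dist_eq, abs_sub_comm]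
    exact max_lt (by rw [abs_of_nonneg (by linarith [ht.2])]; linarith [ht.1]) hx
  refine (hP.abs_integral_sub_integral_le hE (fun q => ?_) hf.aestronglyMeasurable
    (g := fun t => f (t, u t)) (hf.measurable.comp (measurable_id.prodMk hu)).aestronglyMeasurable
    (c := fun q => f (b q.1 + L, a q.2)) ?_ ?_).trans_eq (by rw [hμT])
  · rw [Measure.restrict_apply (hE.measurableSet q), inter_eq_left.2 ((hEI q).trans (hIT q.1)),
      hEm q, ofReal_measureReal]
  · rintro ⟨j, i⟩ ⟨t, x⟩ ⟨ht, hx⟩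
    exact hosc j i t ht x (hSa i hx)
  · rintro ⟨j, i⟩ t ht
    rw [hua (j, i) t ht]
    exact hosc j i t (hEI (j, i) ht) (a i) (by simpa using hδ)

/-- Chattering lemma (deterministic form): every relaxed control `μ` on
`[0,T] × A` whose time-marginal is Lebesgue measure on `[0,T]` is the
stable (weak-*) limit of Dirac relaxed controls `δ_{u_n(t)}(da) dt`
associated with measurable strict controls `u_n : [0,T] → A`. -/
theorem chattering_lemma {A : Type*} [MetricSpace A] [CompactSpace A]
    [Nonempty A] [MeasurableSpace A] [BorelSpace A]
    (T : ℝ) (hT : 0 < T) (μ : Measure (ℝ × A))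
    (hmarg : μ.map Prod.fst = volume.restrict (Set.Icc 0 T)) :
    ∃ u : ℕ → ℝ → A, (∀ n, Measurable (u n)) ∧
      ∀ f : ℝ × A → ℝ, Continuous f →
        Tendsto (fun n => ∫ t in (0:ℝ)..T, f (t, u n t)) atTop
          (nhds (∫ p, f p ∂μ)) := by
  rw [← Measure.restrict_congr_set Ioc_ae_eq_Icc] at hmarg
  choose u hu hclose using fun n : ℕ =>
    exists_strict_control_approx hT hmarg (Nat.one_div_pos_of_nat (n := n))
  refine ⟨u, hu, fun f hf => Metric.tendsto_atTop.2 fun ε hε => ?_⟩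
  obtain ⟨δ, hδ, hfδ⟩ := Metric.uniformContinuousOn_iff.1
    ((isCompact_Icc.prod isCompact_univ).uniformContinuousOn_of_continuous hf.continuousOn)
    (ε / (4 * T)) (by positivity)
  obtain ⟨n₀, hn₀⟩ := exists_nat_one_div_lt hδ
  refine ⟨n₀, fun n hn => ?_⟩
  have hnδ : 1 / ((n : ℝ) + 1) < δ := (Nat.one_div_le_one_div hn).trans_lt hn₀
  rw [Real.dist_eq, intervalIntegral.integral_of_le hT.le]
  calc _ ≤ 2 * (ε / (4 * T)) * T :=
        hclose n f hf _ fun p hp q hq hpq => hfδ p hp q hq (hpq.trans hnδ)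
    _ < ε := by field_simp; linarith
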